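/- arXiv:2412.11319 — 10 statements merged into one kernel-verified Lean document; each statement's English description precedes it below -/
import Mathlib

section
/- Let S = {n ∈ ℕ : T(n) = 0, T(n+1) = 1, T(n+2) = 0} be the set of starting positions of the block (0,1,0) in the Prouhet–Thue–Morse sequence. Then S is infinite, and for any two consecutive elements n < n' of S (i.e., n, n' ∈ S and no element of S lies strictly between them) the difference n' − n lies in the set {3, 5, 7, 9}; in particular, for every n ∈ S there exists m ∈ S with n < m ≤ n + 9. -/
/-- The Prouhet–Thue–Morse sequence: sum of binary digits of `n` mod 2. -/
def PTM (n : ℕ) : ℕ := (Nat.digits 2 n).sum % 2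

lemma ptm01 (n : ℕ) : PTM n = 0 ∨ PTM n = 1 := Nat.mod_two_eq_zero_or_one _

lemma ptm_even (n : ℕ) : PTM (2 * n) = PTM n := by
  rcases Nat.eq_zero_or_pos n with h | h
  · simp [h, PTM]
  · unfold PTM
    rw [Nat.digits_def' (by norm_num : 1 < 2) (by omega)]
    rw [show 2 * n % 2 = 0 by omega, show 2 * n / 2 = n by omega]
    simp

lemma ptm_odd (n : ℕ) : PTM (2 * n + 1) = (PTM n + 1) % 2 := by
  unfold PTM
  rw [Nat.digits_def' (by norm_num : 1 < 2) (by omega)]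
  rw [show (2 * n + 1) % 2 = 1 by omega, show (2 * n + 1) / 2 = n by omega]
  simp only [List.sum_cons]
  omega

lemma t4k (k : ℕ) : PTM (4 * k) = PTM k := by
  rw [show 4 * k = 2 * (2 * k) by ring, ptm_even, ptm_even]

lemma t4k1 (k : ℕ) : PTM (4 * k + 1) = (PTM k + 1) % 2 := by
  rw [show 4 * k + 1 = 2 * (2 * k) + 1 by ring, ptm_odd, ptm_even]

lemma t4k2 (k : ℕ) : PTM (4 * k + 2) = (PTM k + 1) % 2 := by
  rw [show 4 * k + 2 = 2 * (2 * k + 1) by ring, ptm_even, ptm_odd]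

lemma t4k3 (k : ℕ) : PTM (4 * k + 3) = PTM k := by
  rw [show 4 * k + 3 = 2 * (2 * k + 1) + 1 by ring, ptm_odd, ptm_odd]
  rcases ptm01 k with h | h <;> rw [h]

def inS (n : ℕ) : Prop := PTM n = 0 ∧ PTM (n + 1) = 1 ∧ PTM (n + 2) = 0

lemma inS_of_a (k : ℕ) (h1 : PTM k = 1) (h0 : PTM (k + 1) = 0) : inS (4 * k + 2) := by
  refine ⟨?_, ?_, ?_⟩
  · rw [t4k2, h1]
  · rw [show 4 * k + 2 + 1 = 4 * k + 3 by ring, t4k3, h1]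
  · rw [show 4 * k + 2 + 2 = 4 * (k + 1) by ring, t4k, h0]

lemma inS_of_b (k : ℕ) (h0 : PTM k = 0) (h1 : PTM (k + 1) = 1) : inS (4 * k + 3) := by
  refine ⟨?_, ?_, ?_⟩
  · rw [t4k3, h0]
  · rw [show 4 * k + 3 + 1 = 4 * (k + 1) by ring, t4k, h1]
  · rw [show 4 * k + 3 + 2 = 4 * (k + 1) + 1 by ring, t4k1, h1]

lemma inS_cases (n : ℕ) (h : inS n) :
    ∃ k, (n = 4 * k + 2 ∧ PTM k = 1 ∧ PTM (k + 1) = 0) ∨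
         (n = 4 * k + 3 ∧ PTM k = 0 ∧ PTM (k + 1) = 1) := by
  obtain ⟨h0, h1, h2⟩ := h
  obtain ⟨k, hcase⟩ : ∃ k, n = 4 * k ∨ n = 4 * k + 1 ∨ n = 4 * k + 2 ∨ n = 4 * k + 3 :=
    ⟨n / 4, by omega⟩
  rcases hcase with rfl | rfl | rfl | rfl
  · rw [show 4 * k + 1 + 1 = 4 * k + 2 by ring, t4k2] at h2
    rw [t4k1] at h1
    omega
  · rw [show 4 * k + 1 + 1 = 4 * k + 2 by ring, t4k2] at h1
    rw [t4k1] at h0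
    omega
  · rw [t4k2] at h0
    rw [show 4 * k + 2 + 2 = 4 * (k + 1) by ring, t4k] at h2
    exact ⟨k, Or.inl ⟨rfl, by rcases ptm01 k with h | h <;> omega, h2⟩⟩
  · rw [t4k3] at h0
    rw [show 4 * k + 3 + 1 = 4 * (k + 1) by ring, t4k] at h1
    exact ⟨k, Or.inr ⟨rfl, h0, h1⟩⟩

lemma ptm_pair (k : ℕ) : PTM (2 * k) ≠ PTM (2 * k + 1) := by
  rw [ptm_even, ptm_odd]
  rcases ptm01 k with h | h <;> rw [h] <;> norm_num

lemma neq_step (k : ℕ) : PTM k ≠ PTM (k + 1) ∨ PTM (k + 1) ≠ PTM (k + 2) := by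
  rcases Nat.even_or_odd k with ⟨j, rfl⟩ | ⟨j, rfl⟩
  · left
    rw [show j + j = 2 * j by ring]
    exact ptm_pair j
  · right
    rw [show 2 * j + 1 + 1 = 2 * (j + 1) by ring, show 2 * j + 1 + 2 = 2 * (j + 1) + 1 by ring]
    exact ptm_pair (j + 1)

lemma near (k : ℕ) : ∃ m, inS m ∧ 4 * k + 2 ≤ m ∧ m ≤ 4 * k + 7 := by
  rcases neq_step k with h | h
  · rcases ptm01 k with h0 | h0 <;> rcases ptm01 (k + 1) with h1 | h1
    · exact absurd (h0.trans h1.symm) h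
    · exact ⟨4 * k + 3, inS_of_b k h0 h1, by omega, by omega⟩
    · exact ⟨4 * k + 2, inS_of_a k h0 h1, by omega, by omega⟩
    · exact absurd (h0.trans h1.symm) h
  · rcases ptm01 (k + 1) with h0 | h0 <;> rcases ptm01 (k + 2) with h1 | h1
    · exact absurd (h0.trans h1.symm) h
    · exact ⟨4 * (k + 1) + 3,
        inS_of_b (k + 1) h0 (by rw [show k + 1 + 1 = k + 2 by ring]; exact h1),
        by omega, by omega⟩
    · exact ⟨4 * (k + 1) + 2,
        inS_of_a (k + 1) h0 (by rw [show k + 1 + 1 = k + 2 by ring]; exact h1),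
        by omega, by omega⟩
    · exact absurd (h0.trans h1.symm) h

theorem stmt2 (S : Set ℕ)
    (hS : S = {n : ℕ | PTM n = 0 ∧ PTM (n + 1) = 1 ∧ PTM (n + 2) = 0}) :
    S.Infinite ∧
    (∀ n n' : ℕ, n ∈ S → n' ∈ S → n < n' → (∀ k ∈ S, ¬(n < k ∧ k < n')) →
      n' - n ∈ ({3, 5, 7, 9} : Set ℕ)) ∧
    (∀ n ∈ S, ∃ m ∈ S, n < m ∧ m ≤ n + 9) := by
  subst hS
  have memS : ∀ x : ℕ, x ∈ {n : ℕ | PTM n = 0 ∧ PTM (n + 1) = 1 ∧ PTM (n + 2) = 0} ↔ inS x :=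
    fun x => Iff.rfl
  have part3 : ∀ n, inS n → ∃ m, inS m ∧ n < m ∧ m ≤ n + 9 := by
    intro n hn
    obtain ⟨k, hk⟩ := inS_cases n hn
    obtain ⟨m, hm, h1, h2⟩ := near (k + 1)
    rcases hk with ⟨e, -, -⟩ | ⟨e, -, -⟩ <;> exact ⟨m, hm, by omega, by omega⟩
  refine ⟨?_, ?_, ?_⟩
  · apply Set.infinite_of_forall_exists_gt
    intro a
    obtain ⟨m, hm, h1, h2⟩ := near a
    exact ⟨m, (memS m).mpr hm, by omega⟩
  · intro n n' hn hn' hlt hbet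
    have hn : inS n := (memS n).mp hn
    have hn' : inS n' := (memS n').mp hn'
    obtain ⟨m, hm, hm1, hm2⟩ := part3 n hn
    have hle : n' ≤ n + 9 := by
      by_contra hgt
      exact hbet m ((memS m).mpr hm) ⟨hm1, by omega⟩
    simp only [Set.mem_insert_iff, Set.mem_singleton_iff]
    obtain ⟨k, hk⟩ := inS_cases n hn
    obtain ⟨k', hk'⟩ := inS_cases n' hn'
    rcases hk with ⟨e, a1, a2⟩ | ⟨e, b1, b2⟩ <;> rcases hk' with ⟨e', c1, c2⟩ | ⟨e', d1, d2⟩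
    · -- n = 4k+2, n' = 4k'+2 : diff 4 or 8
      have hkk : k' = k + 1 ∨ k' = k + 2 := by omega
      rcases hkk with rfl | rfl
      · omega
      · have hb : inS (4 * (k + 1) + 3) :=
          inS_of_b (k + 1) a2 (by rw [show k + 1 + 1 = k + 2 by ring]; exact c1)
        exact (hbet (4 * (k + 1) + 3) ((memS _).mpr hb) ⟨by omega, by omega⟩).elim
    · -- n = 4k+2, n' = 4k'+3 : diff 1, 5 or 9
      have hkk : k' = k ∨ k' = k + 1 ∨ k' = k + 2 := by omega
      rcases hkk with rfl | rfl | rfl <;> omega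
    · -- n = 4k+3, n' = 4k'+2 : diff 3 or 7
      omega
    · -- n = 4k+3, n' = 4k'+3 : diff 4 or 8
      have hkk : k' = k + 1 ∨ k' = k + 2 := by omega
      rcases hkk with rfl | rfl
      · omega
      · have ha : inS (4 * (k + 1) + 2) :=
          inS_of_a (k + 1) b2 (by rw [show k + 1 + 1 = k + 2 by ring]; exact d1)
        exact (hbet (4 * (k + 1) + 2) ((memS _).mpr ha) ⟨by omega, by omega⟩).elim
  · intro n hn
    obtain ⟨m, hm, h1, h2⟩ := part3 n ((memS n).mp hn)
    exact ⟨m, (memS m).mpr hm, h1, h2⟩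
end

section
/- Suppose there exists c ∈ ℕ, c ≥ 1, such that for every n ∈ R̃ there exists m ∈ R̃ with n < m ≤ n + c. Then the set of quotients {f̃(n+1)/f̃(n) : n ∈ ℕ} ⊆ K has at most 4^(c−1) + 1 elements. -/
open MvPolynomial

/-- The indeterminate `a` in `ℤ[a,b]`. -/
noncomputable def pa : MvPolynomial (Fin 2) ℤ := X 0
/-- The indeterminate `b` in `ℤ[a,b]`. -/
noncomputable def pb : MvPolynomial (Fin 2) ℤ := X 1

section Abstract
variable {K : Type*} [Field K] [DecidableEq K]

/-- The successor map on pairs of consecutive ratios. -/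
def Sc (A B : K) (p : K × K) : Finset (K × K) :=
  {(A + B / p.1, p.1), (A + B / (p.1 * p.2), p.1),
   (A / p.1 + B / p.1, p.1), (A / p.1 + B / (p.1 * p.2), p.1)}

def sv (A B : K) : K := A + B / (A + B)

def pc1 (A B : K) : K × K := (A + B, 1)
def pc2 (A B : K) : K × K := (A + B / sv A B, sv A B)
def pc3 (A B : K) : K × K := (A / sv A B + B / sv A B, sv A B)
def pq1 (A B : K) : K × K := (1, A + B)
def pq2 (A B : K) : K × K := (sv A B, A + B)
def pe1 (A B : K) : K × K := (sv A B, 1)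
def pe2 (A B : K) : K × K := (A + B / (sv A B * (A + B)), sv A B)
def pe3 (A B : K) : K × K := (A / sv A B + B / (sv A B * (A + B)), sv A B)

def S6 (A B : K) : Finset (K × K) := {pc1 A B, pc2 A B, pc3 A B, pq1 A B, pq2 A B, pe1 A B}

def FFa (A B : K) : ℕ → Finset (K × K)
  | 0 => Sc A B (pc2 A B) ∪ Sc A B (pc3 A B) ∪ {pe2 A B, pe3 A B}
  | j + 1 => (FFa A B j).biUnion (Sc A B) ∪ {pe2 A B, pe3 A B}

def Dp (A B : K) (k : ℕ) : Finset (K × K) := S6 A B ∪ (Finset.range (k - 1)).biUnion (FFa A B)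

def Tv (A B : K) (c : ℕ) : Finset K :=
  {1, sv A B, A + B, A + B / sv A B, A / sv A B + B / sv A B} ∪
    (Finset.range (c - 2)).biUnion fun j => (FFa A B j).image Prod.fst

lemma card_Sc (A B : K) (p : K × K) : (Sc A B p).card ≤ 4 := by
  unfold Sc
  apply le_trans (Finset.card_insert_le _ _)
  have h1 := Finset.card_insert_le (A + B / (p.1 * p.2), p.1)
    ({(A / p.1 + B / p.1, p.1), (A / p.1 + B / (p.1 * p.2), p.1)} : Finset (K × K))
  have h2 := Finset.card_insert_le (A / p.1 + B / p.1, p.1)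
    ({(A / p.1 + B / (p.1 * p.2), p.1)} : Finset (K × K))
  simp [Finset.card_singleton] at *
  omega

lemma card_FFa (A B : K) (j : ℕ) : (FFa A B j).card ≤ 12 * 4 ^ j - 2 := by
  induction j with
  | zero =>
    unfold FFa
    have h1 := Finset.card_union_le (Sc A B (pc2 A B) ∪ Sc A B (pc3 A B))
      ({pe2 A B, pe3 A B} : Finset (K × K))
    have h2 := Finset.card_union_le (Sc A B (pc2 A B)) (Sc A B (pc3 A B))
    have h3 := card_Sc A B (pc2 A B)
    have h4 := card_Sc A B (pc3 A B)
    have h5 : ({pe2 A B, pe3 A B} : Finset (K × K)).card ≤ 2 :=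
      le_trans (Finset.card_insert_le _ _) (by simp)
    simp only [pow_zero] at *
    omega
  | succ j ih =>
    unfold FFa
    have h1 := Finset.card_union_le ((FFa A B j).biUnion (Sc A B))
      ({pe2 A B, pe3 A B} : Finset (K × K))
    have h2 : ((FFa A B j).biUnion (Sc A B)).card ≤ (FFa A B j).card * 4 :=
      Finset.card_biUnion_le_card_mul _ _ _ (fun p _ => card_Sc A B p)
    have h5 : ({pe2 A B, pe3 A B} : Finset (K × K)).card ≤ 2 :=
      le_trans (Finset.card_insert_le _ _) (by simp)
    have h6 : (1:ℕ) ≤ 4 ^ j := Nat.one_le_pow _ _ (by norm_num)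
    have h7 : (4:ℕ) ^ (j + 1) = 4 * 4 ^ j := by ring
    omega

lemma geom_sum_aux (n : ℕ) : (∑ j ∈ Finset.range n, (12 * 4 ^ j)) + 4 = 4 ^ (n + 1) := by
  induction n with
  | zero => simp
  | succ n ih =>
    rw [Finset.sum_range_succ]
    have : (4:ℕ) ^ (n + 2) = 4 * 4 ^ (n + 1) := by ring
    omega

lemma card_Tv (A B : K) (c : ℕ) (hc : 2 ≤ c) : (Tv A B c).card ≤ 4 ^ (c - 1) + 1 := by
  unfold Tv
  have h1 := Finset.card_union_le
    ({1, sv A B, A + B, A + B / sv A B, A / sv A B + B / sv A B} : Finset K)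
    ((Finset.range (c - 2)).biUnion fun j => (FFa A B j).image Prod.fst)
  have h2 : ({1, sv A B, A + B, A + B / sv A B, A / sv A B + B / sv A B} : Finset K).card ≤ 5 := by
    apply le_trans (Finset.card_insert_le _ _)
    have := Finset.card_insert_le (sv A B) ({A + B, A + B / sv A B, A / sv A B + B / sv A B} : Finset K)
    have := Finset.card_insert_le (A + B) ({A + B / sv A B, A / sv A B + B / sv A B} : Finset K)
    have := Finset.card_insert_le (A + B / sv A B) ({A / sv A B + B / sv A B} : Finset K)
    simp [Finset.card_singleton] at *
    omega
  have h3 : ((Finset.range (c - 2)).biUnion fun j => (FFa A B j).image Prod.fst).card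
      ≤ ∑ j ∈ Finset.range (c - 2), 12 * 4 ^ j := by
    apply le_trans (Finset.card_biUnion_le)
    apply Finset.sum_le_sum
    intro j _
    exact le_trans (Finset.card_image_le) (le_trans (card_FFa A B j) (by omega))
  have h4 := geom_sum_aux (c - 2)
  have h5 : c - 2 + 1 = c - 1 := by omega
  rw [h5] at h4
  have h6 : (4:ℕ) ≤ 4 ^ (c - 1) := by
    calc (4:ℕ) = 4 ^ 1 := by norm_num
    _ ≤ 4 ^ (c - 1) := Nat.pow_le_pow_right (by norm_num) (by omega)
  omega

lemma Sc_S6 (A B : K) (hAB : A + B ≠ 0) :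
    ∀ p ∈ S6 A B, Sc A B p ⊆ S6 A B ∪ FFa A B 0 := by
  intro p hp
  simp only [S6, Finset.mem_insert, Finset.mem_singleton] at hp
  rcases hp with h | h | h | h | h | h
  · subst h
    intro q hq
    simp only [Sc, pc1, Finset.mem_insert, Finset.mem_singleton] at hq
    apply Finset.mem_union_left
    simp only [S6, Finset.mem_insert, Finset.mem_singleton]
    rcases hq with h | h | h | h <;> subst h
    · exact Or.inr (Or.inr (Or.inr (Or.inr (Or.inl rfl))))
    · refine Or.inr (Or.inr (Or.inr (Or.inr (Or.inl ?_))))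
      simp [pq2, sv, mul_one]
    · refine Or.inr (Or.inr (Or.inr (Or.inl ?_)))
      simp only [pq1, Prod.mk.injEq]
      exact ⟨by rw [← add_div, div_self hAB], trivial⟩
    · refine Or.inr (Or.inr (Or.inr (Or.inl ?_)))
      simp only [pq1, Prod.mk.injEq, mul_one]
      exact ⟨by rw [← add_div, div_self hAB], trivial⟩
  · subst h
    intro q hq
    apply Finset.mem_union_right
    show q ∈ FFa A B 0
    unfold FFa
    exact Finset.mem_union_left _ (Finset.mem_union_left _ hq)
  · subst h
    intro q hq
    apply Finset.mem_union_right
    show q ∈ FFa A B 0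
    unfold FFa
    exact Finset.mem_union_left _ (Finset.mem_union_right _ hq)
  · subst h
    intro q hq
    simp only [Sc, pq1, Finset.mem_insert, Finset.mem_singleton] at hq
    apply Finset.mem_union_left
    simp only [S6, Finset.mem_insert, Finset.mem_singleton]
    rcases hq with h | h | h | h <;> subst h
    · exact Or.inl (by simp [pc1])
    · refine Or.inr (Or.inr (Or.inr (Or.inr (Or.inr ?_))))
      simp [pe1, sv, one_mul]
    · exact Or.inl (by simp [pc1])
    · refine Or.inr (Or.inr (Or.inr (Or.inr (Or.inr ?_))))
      simp [pe1, sv, one_mul]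
  · subst h
    intro q hq
    simp only [Sc, pq2, Finset.mem_insert, Finset.mem_singleton] at hq
    rcases hq with h | h | h | h <;> subst h
    · exact Finset.mem_union_left _ (by simp [S6, pc2])
    · apply Finset.mem_union_right
      show _ ∈ FFa A B 0
      unfold FFa
      exact Finset.mem_union_right _ (by simp [pe2])
    · exact Finset.mem_union_left _ (by simp [S6, pc3])
    · apply Finset.mem_union_right
      show _ ∈ FFa A B 0
      unfold FFa
      exact Finset.mem_union_right _ (by simp [pe3])
  · subst h
    intro q hq
    simp only [Sc, pe1, Finset.mem_insert, Finset.mem_singleton] at hq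
    apply Finset.mem_union_left
    rcases hq with h | h | h | h <;> subst h
    · simp [S6, pc2]
    · simp [S6, pc2, mul_one]
    · simp [S6, pc2, pc3]
    · simp [S6, pc2, pc3, mul_one]

lemma Sc_Dp (A B : K) (hAB : A + B ≠ 0) (k : ℕ) (hk : 1 ≤ k) {p : K × K}
    (hp : p ∈ Dp A B k) : Sc A B p ⊆ Dp A B (k + 1) := by
  rcases Finset.mem_union.1 hp with h | h
  · refine subset_trans (Sc_S6 A B hAB p h) ?_
    intro q hq
    rcases Finset.mem_union.1 hq with h' | h'
    · exact Finset.mem_union_left _ h'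
    · apply Finset.mem_union_right
      rw [Finset.mem_biUnion]
      exact ⟨0, Finset.mem_range.2 (by omega), h'⟩
  · rw [Finset.mem_biUnion] at h
    obtain ⟨j, hj, hpj⟩ := h
    rw [Finset.mem_range] at hj
    intro q hq
    apply Finset.mem_union_right
    rw [Finset.mem_biUnion]
    refine ⟨j + 1, Finset.mem_range.2 (by omega), ?_⟩
    show q ∈ FFa A B (j + 1)
    unfold FFa
    apply Finset.mem_union_left
    rw [Finset.mem_biUnion]
    exact ⟨p, hpj, hq⟩

lemma S6_Dp (A B : K) (k : ℕ) : S6 A B ⊆ Dp A B k := Finset.subset_union_left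

lemma fst_Dp_Tv (A B : K) (c k : ℕ) (hk : k ≤ c - 1) {p : K × K}
    (hp : p ∈ Dp A B k) : p.1 ∈ Tv A B c := by
  rcases Finset.mem_union.1 hp with h | h
  · apply Finset.mem_union_left
    simp only [S6, Finset.mem_insert, Finset.mem_singleton] at h
    rcases h with h | h | h | h | h | h <;> subst h <;>
      simp [pc1, pc2, pc3, pq1, pq2, pe1]
  · rw [Finset.mem_biUnion] at h
    obtain ⟨j, hj, hpj⟩ := h
    rw [Finset.mem_range] at hj
    apply Finset.mem_union_right
    rw [Finset.mem_biUnion]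
    exact ⟨j, Finset.mem_range.2 (by omega), Finset.mem_image_of_mem _ hpj⟩

lemma base_Tv (A B : K) (c : ℕ) (x : K) (hx : x = 1 ∨ x = sv A B ∨ x = A + B) :
    x ∈ Tv A B c := by
  apply Finset.mem_union_left
  rcases hx with h | h | h <;> subst h <;> simp

lemma rat1 (A B X Y : K) (hX : X ≠ 0) (hY : Y ≠ 0) :
    (A * X + B * Y) / X = A + B / (X / Y) := by
  rw [div_div_eq_mul_div]; field_simp

lemma rat2 (A B X Y Z : K) (hX : X ≠ 0) (hY : Y ≠ 0) (hZ : Z ≠ 0) :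
    (A * X + B * Z) / X = A + B / (X / Y * (Y / Z)) := by
  rw [div_mul_div_comm, div_div_eq_mul_div]; field_simp

lemma rat3 (A B X Y : K) (hX : X ≠ 0) (hY : Y ≠ 0) :
    (A * Y + B * Y) / X = A / (X / Y) + B / (X / Y) := by
  rw [div_div_eq_mul_div, div_div_eq_mul_div]; field_simp

lemma rat4 (A B X Y Z : K) (hX : X ≠ 0) (hY : Y ≠ 0) (hZ : Z ≠ 0) :
    (A * Y + B * Z) / X = A / (X / Y) + B / (X / Y * (Y / Z)) := by
  rw [div_mul_div_comm, div_div_eq_mul_div, div_div_eq_mul_div]; field_simp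

variable (A B : K) (u v : ℕ → ℕ) (F : ℕ → K)

lemma seq_step (hu : ∀ n, u n = 0 ∨ u n = 1) (hv : ∀ n, v n = 0 ∨ v n = 1)
    (hF : ∀ n, F n ≠ 0)
    (hrec : ∀ n, 3 ≤ n → F n = A * F (n - 1 - u n) + B * F (n - 2 - v n)) (m : ℕ) :
    (F (m + 3) / F (m + 2), F (m + 2) / F (m + 1)) ∈
      Sc A B (F (m + 2) / F (m + 1), F (m + 1) / F m) := by
  have h := hrec (m + 3) (by omega)
  simp only [Sc, Finset.mem_insert, Finset.mem_singleton, Prod.mk.injEq]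
  rcases hu (m + 3) with hu3 | hu3 <;> rcases hv (m + 3) with hv3 | hv3
  · have e1 : m + 3 - 1 - u (m + 3) = m + 2 := by omega
    have e2 : m + 3 - 2 - v (m + 3) = m + 1 := by omega
    rw [e1, e2] at h
    exact Or.inl ⟨(by rw [h]; exact rat1 A B _ _ (hF (m + 2)) (hF (m + 1))), trivial⟩
  · have e1 : m + 3 - 1 - u (m + 3) = m + 2 := by omega
    have e2 : m + 3 - 2 - v (m + 3) = m := by omega
    rw [e1, e2] at h
    exact Or.inr (Or.inl ⟨(by rw [h]; exact rat2 A B _ _ _ (hF (m + 2)) (hF (m + 1)) (hF m)), trivial⟩)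
  · have e1 : m + 3 - 1 - u (m + 3) = m + 1 := by omega
    have e2 : m + 3 - 2 - v (m + 3) = m + 1 := by omega
    rw [e1, e2] at h
    exact Or.inr (Or.inr (Or.inl ⟨(by rw [h]; exact rat3 A B _ _ (hF (m + 2)) (hF (m + 1))), trivial⟩))
  · have e1 : m + 3 - 1 - u (m + 3) = m + 1 := by omega
    have e2 : m + 3 - 2 - v (m + 3) = m := by omega
    rw [e1, e2] at h
    exact Or.inr (Or.inr (Or.inr ⟨(by rw [h]; exact rat4 A B _ _ _ (hF (m + 2)) (hF (m + 1)) (hF m)), trivial⟩))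

lemma seq_Rpt (hu : ∀ n, u n = 0 ∨ u n = 1)
    (hF : ∀ n, F n ≠ 0) (hAB : A + B ≠ 0)
    (hF0 : F 0 = 1) (hF1 : F 1 = 1) (hF2 : F 2 = A + B)
    (hrec : ∀ n, 3 ≤ n → F n = A * F (n - 1 - u n) + B * F (n - 2 - v n))
    (m : ℕ) (hm : 2 ≤ m)
    (hpat : ((u m = 0 ∧ u (m + 1) = 1) ∨ (u m = 1 ∧ u (m + 1) = 0)))
    (hv0 : v m = 0) (hv1 : v (m + 1) = 1) (hv2 : v (m + 2) = 0) :
    (F (m + 1) / F m = 1 ∨ F (m + 1) / F m = sv A B) ∧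
    (F (m + 2) / F (m + 1), F (m + 1) / F m) ∈
      ({pc1 A B, pc2 A B, pc3 A B} : Finset (K × K)) := by
  have hFm : F m = A * F (m - 1 - u m) + B * F (m - 2) := by
    rcases Nat.lt_or_ge m 3 with h3 | h3
    · have hm2 : m = 2 := by omega
      subst hm2
      rcases hu 2 with h | h <;> rw [h] <;> norm_num <;> simp only [hF0, hF1, hF2] <;> ring
    · have h := hrec m h3
      have e : m - 2 - v m = m - 2 := by omega
      rwa [e] at h
  have hFm1 : F (m + 1) = A * F (m - u (m + 1)) + B * F (m - 2) := by
    have h := hrec (m + 1) (by omega)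
    have e1 : m + 1 - 1 - u (m + 1) = m - u (m + 1) := by omega
    have e2 : m + 1 - 2 - v (m + 1) = m - 2 := by omega
    rwa [e1, e2] at h
  have hFm2 : F (m + 2) = A * F (m + 1 - u (m + 2)) + B * F m := by
    have h := hrec (m + 2) (by omega)
    have e1 : m + 2 - 1 - u (m + 2) = m + 1 - u (m + 2) := by omega
    have e2 : m + 2 - 2 - v (m + 2) = m := by omega
    rwa [e1, e2] at h
  rcases hpat with ⟨hum, hum1⟩ | ⟨hum, hum1⟩
  · rw [hum] at hFm; rw [hum1] at hFm1
    have e : m - 1 - 0 = m - 1 := by omega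
    rw [e] at hFm
    have hEq : F (m + 1) = F m := by rw [hFm1, hFm]
    have hg : F (m + 1) / F m = 1 := by rw [hEq, div_self (hF m)]
    refine ⟨Or.inl hg, ?_⟩
    have hu2 : F (m + 1 - u (m + 2)) = F (m + 1) := by
      rcases hu (m + 2) with h | h <;> rw [h]
      · norm_num
      · have e2 : m + 1 - 1 = m := by omega
        rw [e2, hEq]
    have hg2 : F (m + 2) / F (m + 1) = A + B := by
      have hC : F (m + 2) = (A + B) * F (m + 1) := by
        rw [hFm2, hu2, hEq]; ring
      rw [hC, mul_div_assoc, div_self (hF (m + 1)), mul_one]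
    simp only [Finset.mem_insert, Finset.mem_singleton, Prod.mk.injEq, pc1]
    exact Or.inl ⟨hg2, hg⟩
  · rw [hum] at hFm; rw [hum1] at hFm1
    have e : m - 1 - 1 = m - 2 := by omega
    rw [e] at hFm
    have e2 : m - 0 = m := by omega
    rw [e2] at hFm1
    have hg : F (m + 1) / F m = sv A B := by
      rw [hFm1, hFm]
      rw [show A * (A * F (m - 2) + B * F (m - 2)) + B * F (m - 2)
          = (A * (A + B) + B) * F (m - 2) from by ring,
        show A * F (m - 2) + B * F (m - 2) = (A + B) * F (m - 2) from by ring]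
      rw [mul_div_mul_right _ _ (by
        intro h
        apply hF m
        rw [hFm, h]; ring)]
      rw [sv]
      field_simp
    refine ⟨Or.inr hg, ?_⟩
    simp only [Finset.mem_insert, Finset.mem_singleton, Prod.mk.injEq, pc2, pc3]
    rcases hu (m + 2) with h | h
    · refine Or.inr (Or.inl ⟨?_, hg⟩)
      rw [h] at hFm2
      norm_num at hFm2
      rw [hFm2, rat1 A B _ _ (hF (m + 1)) (hF m), hg]
    · refine Or.inr (Or.inr ⟨?_, hg⟩)
      rw [h] at hFm2
      have e3 : m + 1 - 1 = m := by omega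
      rw [e3] at hFm2
      rw [hFm2, rat3 A B _ _ (hF (m + 1)) (hF m), hg]

end Abstract

set_option maxHeartbeats 2000000 in
theorem stmt3 (u v : ℕ → ℕ)
    (hu : ∀ n, u n = 0 ∨ u n = 1) (hv : ∀ n, v n = 0 ∨ v n = 1)
    (f : ℕ → MvPolynomial (Fin 2) ℤ)
    (hf0 : f 0 = 1) (hf1 : f 1 = 1) (hf2 : f 2 = pa + pb)
    (hfrec : ∀ n, 3 ≤ n → f n = pa * f (n - 1 - u n) + pb * f (n - 2 - v n))
    (R : Set ℕ)
    (hR : R = {n : ℕ | ((u n = 0 ∧ u (n + 1) = 1) ∨ (u n = 1 ∧ u (n + 1) = 0)) ∧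
        v n = 0 ∧ v (n + 1) = 1 ∧ v (n + 2) = 0} ∪ {0})
    (c : ℕ) (hc : 1 ≤ c)
    (hgap : ∀ n ∈ R, ∃ m ∈ R, n < m ∧ m ≤ n + c) :
    let φ := algebraMap (MvPolynomial (Fin 2) ℤ) (FractionRing (MvPolynomial (Fin 2) ℤ))
    ({x | ∃ n : ℕ, x = φ (f (n + 1)) / φ (f n)}).Finite ∧
    ({x | ∃ n : ℕ, x = φ (f (n + 1)) / φ (f n)}).ncard ≤ 4 ^ (c - 1) + 1 := by
  intro φ
  classical
  have hR0 : (0:ℕ) ∈ R := by rw [hR]; exact Set.mem_union_right _ rfl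
  have hRpat : ∀ m, m ∈ R → m ≠ 0 →
      ((u m = 0 ∧ u (m + 1) = 1) ∨ (u m = 1 ∧ u (m + 1) = 0)) ∧
        v m = 0 ∧ v (m + 1) = 1 ∧ v (m + 2) = 0 := by
    intro m hm h0
    rw [hR] at hm
    rcases hm with h | h
    · exact h
    · exact absurd h h0
  -- c = 1 is contradictory
  rcases Nat.lt_or_ge c 2 with hc1 | hc2
  · exfalso
    have hcc : c = 1 := by omega
    subst hcc
    have hallR : ∀ n : ℕ, n ∈ R := by
      intro n
      induction n with
      | zero => exact hR0
      | succ n ihn =>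
        obtain ⟨m, hmR, hlt, hle⟩ := hgap n ihn
        have hme : m = n + 1 := by omega
        rwa [← hme]
    obtain ⟨-, -, hv21, -⟩ := hRpat 1 (hallR 1) one_ne_zero
    obtain ⟨-, hv20, -⟩ := hRpat 2 (hallR 2) two_ne_zero
    norm_num at hv21 hv20
    omega
  -- main case : c ≥ 2
  have hinj : Function.Injective φ :=
    IsFractionRing.injective (MvPolynomial (Fin 2) ℤ) (FractionRing (MvPolynomial (Fin 2) ℤ))
  have heval : ∀ n, 1 ≤ eval (fun _ => (1:ℤ)) (f n) := by
    intro n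
    induction n using Nat.strong_induction_on with
    | _ n ih =>
      match n with
      | 0 => rw [hf0]; simp
      | 1 => rw [hf1]; simp
      | 2 => rw [hf2]; simp [pa, pb]
      | (k+3) =>
        rw [hfrec (k+3) (by omega)]
        simp only [eval_add, eval_mul]
        have hpa : eval (fun _ => (1:ℤ)) pa = 1 := by simp [pa]
        have hpb : eval (fun _ => (1:ℤ)) pb = 1 := by simp [pb]
        rw [hpa, hpb, one_mul, one_mul]
        have h1 := ih (k+3-1-u (k+3)) (by omega)
        have h2 := ih (k+3-2-v (k+3)) (by omega)
        omega
  have hfne : ∀ n, f n ≠ 0 := by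
    intro n h
    have := heval n
    rw [h] at this
    simp at this
  have hFne : ∀ n, φ (f n) ≠ 0 := fun n h => hfne n (hinj (by rw [h, map_zero]))
  set A := φ pa with hA
  set B := φ pb with hB
  have hpapb : pa + pb ≠ 0 := by
    intro h
    have := congrArg (eval fun _ => (1:ℤ)) h
    simp [pa, pb] at this
  have hAB : A + B ≠ 0 := by
    rw [hA, hB, ← map_add]
    exact fun h => hpapb (hinj (by rw [h, map_zero]))
  have hF0 : φ (f 0) = 1 := by rw [hf0, map_one]
  have hF1 : φ (f 1) = 1 := by rw [hf1, map_one]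
  have hF2 : φ (f 2) = A + B := by rw [hf2, map_add, hA, hB]
  have hrecF : ∀ n, 3 ≤ n →
      φ (f n) = A * φ (f (n - 1 - u n)) + B * φ (f (n - 2 - v n)) := by
    intro n hn
    rw [hfrec n hn, map_add, map_mul, map_mul, hA, hB]
  set F : ℕ → FractionRing (MvPolynomial (Fin 2) ℤ) := fun n => φ (f n) with hFdef
  -- ratio facts at points of R
  have hRpt : ∀ m, m ∈ R →
      (F (m + 1) / F m = 1 ∨ F (m + 1) / F m = sv A B ∨ F (m + 1) / F m = A + B) ∧
      (F (m + 2) / F (m + 1), F (m + 1) / F m) ∈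
        ({pc1 A B, pc2 A B, pc3 A B, pq1 A B, pq2 A B} :
          Finset (FractionRing (MvPolynomial (Fin 2) ℤ) × FractionRing (MvPolynomial (Fin 2) ℤ))) := by
    intro m hm
    rcases Nat.lt_or_ge m 2 with hm2 | hm2
    · interval_cases m
      · -- m = 0
        have hg0 : F 1 / F 0 = 1 := by
          show φ (f 1) / φ (f 0) = 1
          rw [hF0, hF1, div_one]
        have hg1 : F 2 / F 1 = A + B := by
          show φ (f 2) / φ (f 1) = A + B
          rw [hF1, hF2, div_one]
        refine ⟨Or.inl hg0, ?_⟩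
        simp only [Finset.mem_insert, Finset.mem_singleton, Prod.mk.injEq, pc1]
        exact Or.inl ⟨hg1, hg0⟩
      · -- m = 1
        have hpat := hRpat 1 hm one_ne_zero
        have hv3 : v 3 = 0 := hpat.2.2.2
        have hg1 : F 2 / F 1 = A + B := by
          show φ (f 2) / φ (f 1) = A + B
          rw [hF1, hF2, div_one]
        refine ⟨Or.inr (Or.inr hg1), ?_⟩
        have hF3 : F 3 = A * F (2 - u 3) + B * F 1 := by
          have h := hrecF 3 (by omega)
          have e1 : 3 - 1 - u 3 = 2 - u 3 := by omega
          have e2 : 3 - 2 - v 3 = 1 := by omega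
          rw [e1, e2] at h
          exact h
        simp only [Finset.mem_insert, Finset.mem_singleton, Prod.mk.injEq, pq1, pq2]
        rcases hu 3 with h3 | h3
        · -- u 3 = 0 : ratio sv, pair pq2
          rw [h3] at hF3
          norm_num at hF3
          refine Or.inr (Or.inr (Or.inr (Or.inr ⟨?_, hg1⟩)))
          have : F 3 / F 2 = sv A B := by
            rw [hF3]
            show (A * φ (f 2) + B * φ (f 1)) / φ (f 2) = sv A B
            rw [hF1, hF2, mul_one, sv]
            field_simp
          exact this
        · -- u 3 = 1 : ratio 1, pair pq1
          rw [h3] at hF3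
          norm_num at hF3
          refine Or.inr (Or.inr (Or.inr (Or.inl ⟨?_, hg1⟩)))
          have : F 3 / F 2 = 1 := by
            rw [hF3]
            show (A * φ (f 1) + B * φ (f 1)) / φ (f 2) = 1
            rw [hF1, hF2, mul_one, mul_one, div_self hAB]
          exact this
    · -- m ≥ 2
      have hpat := hRpat m hm (by omega)
      have h := seq_Rpt A B u v F hu hFne hAB hF0 hF1 hF2 hrecF m hm2
        hpat.1 hpat.2.1 hpat.2.2.1 hpat.2.2.2
      refine ⟨?_, ?_⟩
      · rcases h.1 with h' | h'
        · exact Or.inl h'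
        · exact Or.inr (Or.inl h')
      · have h2 := h.2
        simp only [Finset.mem_insert, Finset.mem_singleton] at h2 ⊢
        rcases h2 with h' | h' | h'
        · exact Or.inl h'
        · exact Or.inr (Or.inl h')
        · exact Or.inr (Or.inr (Or.inl h'))
  have hsubS6 : ∀ q, q ∈ ({pc1 A B, pc2 A B, pc3 A B, pq1 A B, pq2 A B} :
      Finset (FractionRing (MvPolynomial (Fin 2) ℤ) × FractionRing (MvPolynomial (Fin 2) ℤ))) →
      q ∈ S6 A B := by
    intro q hq
    simp only [Finset.mem_insert, Finset.mem_singleton] at hq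
    simp only [S6, Finset.mem_insert, Finset.mem_singleton]
    rcases hq with h' | h' | h' | h' | h'
    · exact Or.inl h'
    · exact Or.inr (Or.inl h')
    · exact Or.inr (Or.inr (Or.inl h'))
    · exact Or.inr (Or.inr (Or.inr (Or.inl h')))
    · exact Or.inr (Or.inr (Or.inr (Or.inr (Or.inl h'))))
  -- main induction
  have main : ∀ n : ℕ, (n + 1) ∉ R → ∃ m, m ∈ R ∧ m ≤ n ∧
      (∀ i, m < i → i ≤ n + 1 → i ∉ R) ∧
      (F (n + 2) / F (n + 1), F (n + 1) / F n) ∈ Dp A B (n + 1 - m) := by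
    intro n
    induction n with
    | zero =>
      intro h1
      refine ⟨0, hR0, le_refl 0, ?_, ?_⟩
      · intro i hlt hle
        have : i = 1 := by omega
        subst this
        exact h1
      · have hpr : (F (0 + 2) / F (0 + 1), F (0 + 1) / F 0) = pc1 A B := by
          simp only [Prod.mk.injEq, pc1]
          constructor
          · show φ (f 2) / φ (f 1) = A + B
            rw [hF1, hF2, div_one]
          · show φ (f 1) / φ (f 0) = 1
            rw [hF0, hF1, div_one]
        rw [hpr]
        exact S6_Dp A B _ (by simp [S6])
    | succ n ihn =>
      intro h2
      by_cases h1 : (n + 1) ∈ R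
      · refine ⟨n + 1, h1, le_refl _, ?_, ?_⟩
        · intro i hlt hle
          have : i = n + 2 := by omega
          subst this
          exact h2
        · have hp := (hRpt (n + 1) h1).2
          have e : n + 1 + 1 - (n + 1) = 1 := by omega
          rw [e]
          exact S6_Dp A B 1 (hsubS6 _ hp)
      · obtain ⟨m, hmR, hmle, hint, hDp⟩ := ihn h1
        refine ⟨m, hmR, by omega, ?_, ?_⟩
        · intro i hlt hle
          rcases Nat.lt_or_ge i (n + 2) with h | h
          · exact hint i hlt (by omega)
          · have : i = n + 2 := by omega
            subst this
            exact h2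
        · have hstep := seq_step A B u v F hu hv hFne hrecF n
          have hmem := Sc_Dp A B hAB (n + 1 - m) (by omega) hDp hstep
          have e : n + 1 + 1 - m = (n + 1 - m) + 1 := by omega
          rw [e]
          exact hmem
  -- final assembly
  have hsub : {x | ∃ n : ℕ, x = φ (f (n + 1)) / φ (f n)} ⊆ ↑(Tv A B c) := by
    rintro x ⟨n, rfl⟩
    by_cases hn : n ∈ R
    · have h := (hRpt n hn).1
      exact Finset.mem_coe.2 (base_Tv A B c _ h)
    · have hn0 : n ≠ 0 := fun h => hn (h ▸ hR0)
      obtain ⟨n', rfl⟩ : ∃ n', n = n' + 1 := ⟨n - 1, by omega⟩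
      obtain ⟨m, hmR, hmle, hint, hDp⟩ := main n' hn
      obtain ⟨m', hm'R, hlt', hle'⟩ := hgap m hmR
      have hm'big : n' + 1 < m' := by
        by_contra hcon
        exact (hint m' hlt' (by omega)) hm'R
      have hk : n' + 1 - m ≤ c - 1 := by omega
      exact Finset.mem_coe.2 (fst_Dp_Tv A B c (n' + 1 - m) hk hDp)
  refine ⟨Set.Finite.subset (Tv A B c).finite_toSet hsub, ?_⟩
  calc ({x | ∃ n : ℕ, x = φ (f (n + 1)) / φ (f n)}).ncard
      ≤ (↑(Tv A B c) : Set _).ncard := Set.ncard_le_ncard hsub (Tv A B c).finite_toSet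
    _ = (Tv A B c).card := Set.ncard_coe_finset _
    _ ≤ 4 ^ (c - 1) + 1 := card_Tv A B c hc2
end

section
/- For every sequence u : ℕ → {0,1} and every n ≥ 2, the two possible branch values for f(n+1) differ as polynomials: a·f(n) + b·f(n−1) ≠ a·f(n−1) + b·f(n−2) in ℤ[a,b]. (Consequently the triple (f(n−2), f(n−1), f(n)) together with f(n+1) uniquely determines u(n+1).) -/
open MvPolynomial

theorem stmt5 (u : ℕ → ℕ) (hu : ∀ n, u n = 0 ∨ u n = 1)
    (f : ℕ → MvPolynomial (Fin 2) ℤ)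
    (hf0 : f 0 = 1) (hf1 : f 1 = 1) (hf2 : f 2 = pa + pb)
    (hfrec : ∀ n, 3 ≤ n → f n = pa * f (n - u n - 1) + pb * f (n - u n - 2)) :
    ∀ n, 2 ≤ n →
      pa * f n + pb * f (n - 1) ≠ pa * f (n - 1) + pb * f (n - 2) := by
  intro n hn heq
  set v : Fin 2 → ℤ := ![2, 1] with hv
  set g : ℕ → ℤ := fun k => eval v (f k) with hgdef
  have hpa : eval v pa = 2 := by simp [pa, hv]
  have hpb : eval v pb = 1 := by simp [pb, hv]
  have hg0 : g 0 = 1 := by simp [hgdef, hf0]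
  have hg1 : g 1 = 1 := by simp [hgdef, hf1]
  have hg2 : g 2 = 3 := by simp [hgdef, hf2, hpa, hpb]
  have hgrec : ∀ k, 3 ≤ k → g k = 2 * g (k - u k - 1) + g (k - u k - 2) := by
    intro k hk
    simp only [hgdef, hfrec k hk, map_add, map_mul, hpa, hpb, one_mul]
  -- a convenient restatement of the recurrence at shifted indices
  have hrec' : ∀ j, g (j + 3) = 2 * g (j + 2) + g (j + 1) ∨
      g (j + 3) = 2 * g (j + 1) + g j := by
    intro j
    have h3 := hgrec (j + 3) (by omega)
    rcases hu (j + 3) with h | h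
    · left
      rw [h, show j + 3 - 0 - 1 = j + 2 from by omega,
        show j + 3 - 0 - 2 = j + 1 from by omega] at h3
      exact h3
    · right
      rw [h, show j + 3 - 1 - 1 = j + 1 from by omega,
        show j + 3 - 1 - 2 = j from by omega] at h3
      exact h3
  have key : ∀ k, 1 ≤ g k ∧ g k ≤ g (k + 1) ∧ g k < g (k + 2) := by
    intro k
    induction k using Nat.strong_induction_on with
    | _ k ih =>
      match k with
      | 0 =>
        show 1 ≤ g 0 ∧ g 0 ≤ g 1 ∧ g 0 < g 2
        refine ⟨by omega, by omega, by omega⟩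
      | 1 =>
        show 1 ≤ g 1 ∧ g 1 ≤ g 2 ∧ g 1 < g 3
        have h3 := hrec' 0
        norm_num at h3
        rcases h3 with h3 | h3 <;> exact ⟨by omega, by omega, by omega⟩
      | (m + 2) =>
        show 1 ≤ g (m + 2) ∧ g (m + 2) ≤ g (m + 3) ∧ g (m + 2) < g (m + 4)
        have ihm : 1 ≤ g m ∧ g m ≤ g (m + 1) ∧ g m < g (m + 2) :=
          ih m (by omega)
        have ihm1 : 1 ≤ g (m + 1) ∧ g (m + 1) ≤ g (m + 2) ∧ g (m + 1) < g (m + 3) :=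
          ih (m + 1) (by omega)
        -- positivity at m+2
        have p2 : 1 ≤ g (m + 2) := by omega
        -- monotone step: g (m+2) ≤ g (m+3)
        have mono : g (m + 2) ≤ g (m + 3) := by
          rcases hrec' m with h3 | h3
          · omega
          · match m with
            | 0 => norm_num at h3 ⊢; omega
            | (j + 1) =>
              have ihj : 1 ≤ g j ∧ g j ≤ g (j + 1) ∧ g j < g (j + 2) :=
                ih j (by omega)
              have h2 : g (j + 3) = 2 * g (j + 2) + g (j + 1) ∨
                  g (j + 3) = 2 * g (j + 1) + g j := hrec' j
              have e3 : g (j + 1 + 3) = g (j + 4) := rfl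
              have e2 : g (j + 1 + 2) = g (j + 3) := rfl
              have e1 : g (j + 1 + 1) = g (j + 2) := rfl
              rw [e3, e2, e1] at *
              rcases h2 with h2 | h2 <;> omega
        -- strict step: g (m+2) < g (m+4)
        have strict : g (m + 2) < g (m + 4) := by
          have h4 := hrec' (m + 1)
          simp only [show m + 1 + 3 = m + 4 from rfl, show m + 1 + 2 = m + 3 from rfl,
            show m + 1 + 1 = m + 2 from rfl] at h4
          rcases h4 with h4 | h4 <;> omega
        exact ⟨p2, mono, strict⟩
  -- now the main inequality
  obtain ⟨m, rfl⟩ : ∃ m, n = m + 2 := ⟨n - 2, by omega⟩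
  have heval := congrArg (eval v) heq
  simp only [map_add, map_mul, hpa, hpb, one_mul] at heval
  rw [show m + 2 - 1 = m + 1 from by omega, show m + 2 - 2 = m from by omega] at heval
  have k0 : 1 ≤ g m ∧ g m ≤ g (m + 1) ∧ g m < g (m + 2) := key m
  have k1 : 1 ≤ g (m + 1) ∧ g (m + 1) ≤ g (m + 2) ∧ g (m + 1) < g (m + 3) := key (m + 1)
  have : 2 * g (m + 2) + g (m + 1) = 2 * g (m + 1) + g m := heval
  omega
end

section
/- Let k ≥ 2 and suppose u(k) = u(k+1) = u(k+2) = 0. Define u' : ℕ → {0,1} by u'(j) = u(j) for j ≤ k, u'(k+1) = u'(k+2) = 1, and u'(j) = u(j−1) for j ≥ k+3 (so u'(k+3) = u(k+2) = 0), and let f' be the sequence associated with u' by the same recurrence. Then f'(n) = f(n) for all n ≤ k, f'(n+1) = f(n) for all n ≥ k, and consequently V(f') = V(f). -/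
theorem stmt7 (a b : ℤ) (u u' : ℕ → ℕ)
    (hu : ∀ n, u n = 0 ∨ u n = 1) (hu' : ∀ n, u' n = 0 ∨ u' n = 1)
    (f f' : ℕ → ℤ)
    (hf0 : f 0 = 1) (hf1 : f 1 = 1) (hf2 : f 2 = a + b)
    (hfrec : ∀ n, 3 ≤ n → f n = a * f (n - u n - 1) + b * f (n - u n - 2))
    (hf'0 : f' 0 = 1) (hf'1 : f' 1 = 1) (hf'2 : f' 2 = a + b)
    (hf'rec : ∀ n, 3 ≤ n → f' n = a * f' (n - u' n - 1) + b * f' (n - u' n - 2))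
    (k : ℕ) (hk : 2 ≤ k)
    (hk0 : u k = 0) (hk1 : u (k + 1) = 0) (hk2 : u (k + 2) = 0)
    (hu'le : ∀ j ≤ k, u' j = u j)
    (hu'1 : u' (k + 1) = 1) (hu'2 : u' (k + 2) = 1)
    (hu'ge : ∀ j, k + 3 ≤ j → u' j = u (j - 1)) :
    (∀ n ≤ k, f' n = f n) ∧
    (∀ n, k ≤ n → f' (n + 1) = f n) ∧
    {q : ℚ | ∃ n : ℕ, f' n ≠ 0 ∧ q = (f' (n + 1) : ℚ) / (f' n : ℚ)} =
      {q : ℚ | ∃ n : ℕ, f n ≠ 0 ∧ q = (f (n + 1) : ℚ) / (f n : ℚ)} := by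
  have part1 : ∀ n ≤ k, f' n = f n := by
    intro n
    induction n using Nat.strong_induction_on with
    | _ n ih =>
      intro hn
      rcases Nat.lt_or_ge n 3 with h3 | h3
      · interval_cases n <;> simp [hf0, hf1, hf2, hf'0, hf'1, hf'2]
      · rw [hfrec n h3, hf'rec n h3, hu'le n hn]
        rcases hu n with hv | hv <;>
          rw [ih (n - u n - 1) (by omega) (by omega),
            ih (n - u n - 2) (by omega) (by omega)]
  have part2 : ∀ n, k ≤ n → f' (n + 1) = f n := by
    intro n
    induction n using Nat.strong_induction_on with
    | _ n ih =>
      intro hn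
      rcases Nat.lt_or_ge n (k + 2) with hlt | hge
      · rcases Nat.lt_or_ge n (k + 1) with hlt1 | hge1
        · -- n = k
          have hnk : n = k := by omega
          subst hnk
          rw [hf'rec (n + 1) (by omega), hu'1]
          have i1 : n + 1 - 1 - 1 = n - 1 := by omega
          have i2 : n + 1 - 1 - 2 = n - 2 := by omega
          rw [i1, i2, part1 (n - 1) (by omega), part1 (n - 2) (by omega)]
          rcases Nat.eq_or_lt_of_le hk with h2 | h2
          · have : n = 2 := h2.symm
            subst this
            simp [hf0, hf1, hf2]
          · rw [hfrec n (by omega), hk0]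
            have j1 : n - 0 - 1 = n - 1 := by omega
            have j2 : n - 0 - 2 = n - 2 := by omega
            rw [j1, j2]
        · -- n = k + 1
          have hnk : n = k + 1 := by omega
          subst hnk
          rw [hf'rec (k + 1 + 1) (by omega)]
          have e2 : u' (k + 1 + 1) = 1 := hu'2
          rw [e2]
          have i1 : k + 1 + 1 - 1 - 1 = k := by omega
          have i2 : k + 1 + 1 - 1 - 2 = k - 1 := by omega
          rw [i1, i2, part1 k le_rfl, part1 (k - 1) (by omega),
            hfrec (k + 1) (by omega), hk1]
          have j1 : k + 1 - 0 - 1 = k := by omega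
          have j2 : k + 1 - 0 - 2 = k - 1 := by omega
          rw [j1, j2]
      · -- n ≥ k + 2
        rw [hf'rec (n + 1) (by omega), hu'ge (n + 1) (by omega)]
        have e0 : n + 1 - 1 = n := by omega
        rw [e0]
        rcases hu n with hv | hv
        · have i1 : n + 1 - u n - 1 = (n - 1) + 1 := by omega
          have i2 : n + 1 - u n - 2 = (n - 2) + 1 := by omega
          rw [i1, i2, ih (n - 1) (by omega) (by omega),
            ih (n - 2) (by omega) (by omega), hfrec n (by omega), hv]
          have j1 : n - 0 - 1 = n - 1 := by omega
          have j2 : n - 0 - 2 = n - 2 := by omega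
          rw [j1, j2]
        · have hn3 : k + 3 ≤ n := by
            rcases Nat.lt_or_ge n (k + 3) with h | h
            · have : n = k + 2 := by omega
              rw [this] at hv; omega
            · exact h
          have i1 : n + 1 - u n - 1 = (n - 2) + 1 := by omega
          have i2 : n + 1 - u n - 2 = (n - 3) + 1 := by omega
          rw [i1, i2, ih (n - 2) (by omega) (by omega),
            ih (n - 3) (by omega) (by omega), hfrec n (by omega), hv]
          have j1 : n - 1 - 1 = n - 2 := by omega
          have j2 : n - 1 - 2 = n - 3 := by omega
          rw [j1, j2]
  refine ⟨part1, part2, ?_⟩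
  ext q
  simp only [Set.mem_setOf_eq]
  constructor
  · rintro ⟨n, hne, hq⟩
    rcases lt_trichotomy n k with h | h | h
    · exact ⟨n, by rwa [part1 n h.le] at hne,
        by rw [hq, part1 n h.le, part1 (n + 1) h]⟩
    · subst h
      have hfk : f n ≠ 0 := by rwa [part1 n le_rfl] at hne
      refine ⟨0, by rw [hf0]; norm_num, ?_⟩
      rw [hq, part2 n le_rfl, part1 n le_rfl, hf0, hf1, div_self]
      · norm_num
      · exact_mod_cast hfk
    · have e1 : f' n = f (n - 1) := by
        have := part2 (n - 1) (by omega)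
        rwa [Nat.sub_add_cancel (by omega)] at this
      have e2 : f' (n + 1) = f n := part2 n h.le
      refine ⟨n - 1, by rwa [e1] at hne, ?_⟩
      rw [hq, e1, e2, Nat.sub_add_cancel (by omega)]
  · rintro ⟨n, hne, hq⟩
    rcases Nat.lt_or_ge n k with h | h
    · exact ⟨n, by rwa [part1 n h.le], by rw [hq, part1 n h.le, part1 (n + 1) h]⟩
    · exact ⟨n + 1, by rwa [part2 n h], by rw [hq, part2 n h, part2 (n + 1) (by omega)]⟩
end

section
/- Assume there exist integers n₀ ≥ 2 and d ≥ 2 such that u(n₀) = 0, u(n₀+1) = 1, and u(n₀+j) = 0 for each j ∈ {2, …, d}. Then f(n₀ + j) = f(n₀)·g(j) for all j ∈ {0, 1, …, d}; in particular, if f(n₀) ≠ 0 then f(n₀+j+1)·g(j) = f(n₀+j)·g(j+1) for all j ∈ {0, 1, …, d−1}. -/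
theorem stmt8 (a b : ℤ) (u : ℕ → ℕ) (hu : ∀ n, u n = 0 ∨ u n = 1)
    (f g : ℕ → ℤ)
    (hf0 : f 0 = 1) (hf1 : f 1 = 1) (hf2 : f 2 = a + b)
    (hfrec : ∀ n, 3 ≤ n → f n = a * f (n - u n - 1) + b * f (n - u n - 2))
    (hg0 : g 0 = 1) (hg1 : g 1 = 1)
    (hgrec : ∀ n, 2 ≤ n → g n = a * g (n - 1) + b * g (n - 2))
    (n₀ d : ℕ) (hn₀ : 2 ≤ n₀) (hd : 2 ≤ d)
    (h0 : u n₀ = 0) (h1 : u (n₀ + 1) = 1)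
    (h2 : ∀ j, 2 ≤ j → j ≤ d → u (n₀ + j) = 0) :
    (∀ j ≤ d, f (n₀ + j) = f n₀ * g j) ∧
    (f n₀ ≠ 0 → ∀ j < d, f (n₀ + j + 1) * g j = f (n₀ + j) * g (j + 1)) := by
  have hfn1 : f (n₀ + 1) = f n₀ := by
    rcases Nat.lt_or_ge n₀ 3 with h | h
    · have hn2 : n₀ = 2 := by omega
      subst hn2
      have e1 := hfrec 3 (by norm_num)
      rw [h1] at e1
      norm_num at e1
      rw [e1, hf2, hf0, hf1]; ring
    · have e0 := hfrec n₀ (by omega)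
      have e1 := hfrec (n₀ + 1) (by omega)
      rw [h0] at e0
      rw [h1] at e1
      have i1 : n₀ + 1 - 1 - 1 = n₀ - 1 := by omega
      have i2 : n₀ + 1 - 1 - 2 = n₀ - 2 := by omega
      have i3 : n₀ - 0 - 1 = n₀ - 1 := by omega
      have i4 : n₀ - 0 - 2 = n₀ - 2 := by omega
      rw [i1, i2] at e1
      rw [i3, i4] at e0
      rw [e1, ← e0]
  have key : ∀ j, j ≤ d → f (n₀ + j) = f n₀ * g j := by
    intro j
    induction j using Nat.strong_induction_on with
    | _ j ih =>
      intro hj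
      match j with
      | 0 => simp [hg0]
      | 1 => rw [hfn1, hg1]; ring
      | (k + 2) =>
        have e := hfrec (n₀ + (k + 2)) (by omega)
        rw [h2 (k + 2) (by omega) hj] at e
        have i1 : n₀ + (k + 2) - 0 - 1 = n₀ + (k + 1) := by omega
        have i2 : n₀ + (k + 2) - 0 - 2 = n₀ + k := by omega
        rw [i1, i2] at e
        rw [e, ih (k + 1) (by omega) (by omega), ih k (by omega) (by omega),
          hgrec (k + 2) (by omega)]
        have : k + 2 - 1 = k + 1 := by omega
        rw [this]
        have : k + 2 - 2 = k := by omega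
        rw [this]
        ring
  refine ⟨key, fun _ j hj => ?_⟩
  have e1 : n₀ + j + 1 = n₀ + (j + 1) := by omega
  rw [e1, key (j + 1) (by omega), key j (by omega)]
  ring
end

section
/- Assume that for every integer d ≥ 2 there exists an integer n ≥ 2 with f(n) ≠ 0, u(n) = 0, u(n+1) = 1, and u(n+j) = 0 for each j ∈ {2, …, d}. Then V(g) ⊆ V(f). -/
theorem stmt9 (a b : ℤ) (u : ℕ → ℕ) (hu : ∀ n, u n = 0 ∨ u n = 1)
    (f g : ℕ → ℤ)
    (hf0 : f 0 = 1) (hf1 : f 1 = 1) (hf2 : f 2 = a + b)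
    (hfrec : ∀ n, 3 ≤ n → f n = a * f (n - u n - 1) + b * f (n - u n - 2))
    (hg0 : g 0 = 1) (hg1 : g 1 = 1)
    (hgrec : ∀ n, 2 ≤ n → g n = a * g (n - 1) + b * g (n - 2))
    (hblocks : ∀ d : ℕ, 2 ≤ d → ∃ n : ℕ, 2 ≤ n ∧ f n ≠ 0 ∧
      u n = 0 ∧ u (n + 1) = 1 ∧ ∀ j, 2 ≤ j → j ≤ d → u (n + j) = 0) :
    {q : ℚ | ∃ n : ℕ, g n ≠ 0 ∧ q = (g (n + 1) : ℚ) / (g n : ℚ)} ⊆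
      {q : ℚ | ∃ n : ℕ, f n ≠ 0 ∧ q = (f (n + 1) : ℚ) / (f n : ℚ)} := by
  rintro q ⟨m, hm, rfl⟩
  obtain ⟨n, hn2, hfn, hun, hun1, hublock⟩ := hblocks (m + 2) (by omega)
  have hfn_rec : f n = a * f (n - 1) + b * f (n - 2) := by
    rcases Nat.lt_or_ge n 3 with h | h
    · interval_cases n
      simp [hf2, hf0, hf1]
    · have := hfrec n h
      rw [hun] at this
      simpa using this
  have hfn1 : f (n + 1) = f n := by
    have := hfrec (n + 1) (by omega)
    rw [hun1] at this
    have e1 : n + 1 - 1 - 1 = n - 1 := by omega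
    have e2 : n + 1 - 1 - 2 = n - 2 := by omega
    rw [e1, e2] at this
    rw [this, hfn_rec]
  have key : ∀ j, j ≤ m + 2 → f (n + j) = f n * g j := by
    intro j
    induction j using Nat.strong_induction_on with
    | _ j ih =>
      intro hj
      match j with
      | 0 => simp [hg0]
      | 1 => simp [hg1, hfn1]
      | (k+2) =>
        have h1 := ih (k+1) (by omega) (by omega)
        have h2 := ih k (by omega) (by omega)
        have hu0 : u (n + (k + 2)) = 0 := hublock (k+2) (by omega) hj
        have hr := hfrec (n + (k + 2)) (by omega)
        rw [hu0] at hr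
        have e1 : n + (k + 2) - 0 - 1 = n + (k + 1) := by omega
        have e2 : n + (k + 2) - 0 - 2 = n + k := by omega
        rw [e1, e2, h1, h2] at hr
        have hg := hgrec (k + 2) (by omega)
        have e3 : k + 2 - 1 = k + 1 := by omega
        have e4 : k + 2 - 2 = k := by omega
        rw [e3, e4] at hg
        rw [hr, hg]; ring
  have hfm := key m (by omega)
  have hfm1 := key (m + 1) (by omega)
  refine ⟨n + m, ?_, ?_⟩
  · rw [hfm]; exact mul_ne_zero hfn hm
  · have e : n + m + 1 = n + (m + 1) := by omega
    rw [e, hfm1, hfm]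
    push_cast
    rw [mul_div_mul_left _ _ (by exact_mod_cast hfn : (f n : ℚ) ≠ 0)]
end

section
/- Assume: (1) for every integer d ≥ 0 there exists an integer n ≥ 2 such that u(n+j) = 0 for all j ∈ {0, 1, …, d} and f(n−1)·f(n−2) ≠ 0; (2) a ≠ 0, b ≠ −a², 2b ≠ −a², 3b ≠ −a², and a² + 4b is not the square of an integer. Then the set V(f) is infinite. -/
def pseq (a b : ℤ) : ℕ → ℤ
  | 0 => 0
  | 1 => 1
  | (k+2) => a * pseq a b (k+1) + b * pseq a b k


lemma pseq_complex (a b : ℤ) (δ lam mu : ℂ) (hδ : δ ^ 2 = (a:ℂ)^2 + 4*b)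
    (hlam : lam = ((a:ℂ) + δ)/2) (hmu : mu = ((a:ℂ) - δ)/2) :
    ∀ k, (pseq a b k : ℂ) * δ = lam ^ k - mu ^ k := by
  have hl2 : lam ^ 2 = a * lam + b := by rw [hlam]; linear_combination hδ/4
  have hm2 : mu ^ 2 = a * mu + b := by rw [hmu]; linear_combination hδ/4
  intro k
  induction k using Nat.strong_induction_on with
  | _ k ih =>
    match k with
    | 0 => simp [pseq]
    | 1 => simp [pseq, hlam, hmu]; ring
    | (k+2) =>
      have h1 := ih (k+1) (by omega)
      have h0 := ih k (by omega)
      have el : lam ^ (k+2) = a * lam ^ (k+1) + b * lam ^ k := by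
        calc lam ^ (k+2) = lam ^ 2 * lam ^ k := by ring
        _ = (a*lam+b) * lam ^ k := by rw [hl2]
        _ = a * lam ^ (k+1) + b * lam ^ k := by ring
      have em : mu ^ (k+2) = a * mu ^ (k+1) + b * mu ^ k := by
        calc mu ^ (k+2) = mu ^ 2 * mu ^ k := by ring
        _ = (a*mu+b) * mu ^ k := by rw [hm2]
        _ = a * mu ^ (k+1) + b * mu ^ k := by ring
      show ((a * pseq a b (k+1) + b * pseq a b k : ℤ) : ℂ) * δ = _
      push_cast
      linear_combination a*h1 + b*h0 - el + em

lemma pseq_ne_zero (a b : ℤ) (ha : a ≠ 0)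
    (hb1 : b ≠ -a ^ 2) (hb2 : 2 * b ≠ -a ^ 2) (hb3 : 3 * b ≠ -a ^ 2)
    (hsq : ¬∃ k : ℤ, a ^ 2 + 4 * b = k ^ 2) :
    ∀ k, 1 ≤ k → pseq a b k ≠ 0 := by
  have hb : b ≠ 0 := by rintro rfl; exact hsq ⟨a, by ring⟩
  have hD : a ^ 2 + 4 * b ≠ 0 := by intro h; exact hsq ⟨0, by linarith⟩
  intro k hk hpk
  obtain ⟨δ, hδ⟩ := IsAlgClosed.exists_pow_nat_eq ((a:ℂ)^2 + 4*(b:ℂ)) (n := 2) two_pos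
  set lam : ℂ := ((a:ℂ) + δ)/2 with hlam
  set mu : ℂ := ((a:ℂ) - δ)/2 with hmu
  have hδ0 : δ ≠ 0 := by
    intro h
    rw [h] at hδ
    have : ((a^2 + 4*b : ℤ) : ℂ) = 0 := by push_cast; linear_combination -hδ
    exact hD (by exact_mod_cast this)
  have hlm : lam * mu = -(b:ℂ) := by rw [hlam, hmu]; field_simp; linear_combination -hδ
  have hmu0 : mu ≠ 0 := by
    intro h; rw [h, mul_zero] at hlm
    exact hb (by exact_mod_cast ((neg_eq_zero).mp hlm.symm : (b:ℂ) = 0))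
  have hlam0 : lam ≠ 0 := by
    intro h; rw [h, zero_mul] at hlm
    exact hb (by exact_mod_cast ((neg_eq_zero).mp hlm.symm : (b:ℂ) = 0))
  have hkey := pseq_complex a b δ lam mu hδ hlam hmu k
  rw [hpk] at hkey
  have hpow : lam ^ k = mu ^ k := sub_eq_zero.mp (by simpa using hkey.symm)
  set z : ℂ := lam / mu with hz
  have hzk : z ^ k = 1 := by rw [hz, div_pow, hpow, div_self (pow_ne_zero k hmu0)]
  have habs : ‖z‖ = 1 := by
    by_contra hne
    rcases lt_or_gt_of_ne hne with h | h
    · have h1 : ‖z‖ ^ k < 1 := pow_lt_one₀ (norm_nonneg z) h (by omega)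
      rw [← norm_pow, hzk] at h1; simp at h1
    · have h1 : (1:ℝ) < ‖z‖ ^ k := one_lt_pow₀ h (by omega)
      rw [← norm_pow, hzk] at h1; simp at h1
  have hinv : z⁻¹ = (starRingEnd ℂ) z := Complex.inv_eq_conj habs
  have hz0 : z ≠ 0 := div_ne_zero hlam0 hmu0
  have e1 : z + z⁻¹ = (lam^2 + mu^2)/(lam*mu) := by
    rw [hz, inv_div]; field_simp
  have e2 : lam^2 + mu^2 = (a:ℂ)^2 + 2*b := by rw [hlam, hmu]; linear_combination hδ/2
  have hsum : z + z⁻¹ = ((a:ℂ)^2 + 2*b) / (-(b:ℂ)) := by rw [e1, e2, hlm]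
  have hbQ : (b:ℚ) ≠ 0 := Int.cast_ne_zero.mpr hb
  set q : ℚ := ((a:ℚ)^2 + 2*b) / (-(b:ℚ)) with hq
  have hqC : ((q:ℚ):ℂ) = z + z⁻¹ := by rw [hsum, hq]; push_cast; ring
  have hint1 : IsIntegral ℤ z :=
    ⟨Polynomial.X^k - Polynomial.C 1, Polynomial.monic_X_pow_sub_C 1 (by omega),
      by simp [hzk]⟩
  have hzinv : z⁻¹ = z ^ (k-1) :=
    (eq_inv_of_mul_eq_one_left (by rw [← pow_succ, show k-1+1 = k by omega, hzk])).symm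
  have hint : IsIntegral ℤ ((q:ℚ):ℂ) := by
    rw [hqC, hzinv]; exact hint1.add (hint1.pow _)
  have hintq : IsIntegral ℤ q := by
    have : ((q:ℚ):ℂ) = algebraMap ℚ ℂ q := rfl
    rw [this] at hint
    exact (isIntegral_algebraMap_iff ((algebraMap ℚ ℂ).injective)).mp hint
  obtain ⟨m, hm⟩ := IsIntegrallyClosed.isIntegral_iff.mp hintq
  have hmq : (m:ℚ) = q := by rw [← hm]; simp
  have hbm : b * m = -(a^2 + 2*b) := by
    rw [hq] at hmq
    rw [eq_div_iff (neg_ne_zero.mpr hbQ)] at hmq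
    have h2 : (b:ℚ) * m = -((a:ℚ)^2+2*b) := by linear_combination -hmq
    exact_mod_cast h2
  have hre : (m:ℝ) = 2*z.re := by
    have h1 : ((m:ℝ):ℂ) = z + z⁻¹ := by
      rw [← hqC, ← hmq]; norm_cast
    rw [hinv, Complex.add_conj] at h1
    exact_mod_cast h1
  have hmb : |(m:ℝ)| ≤ 2 := by
    have h3 := Complex.abs_re_le_norm z
    rw [habs] at h3
    rw [hre, abs_mul, abs_two]
    linarith
  have hm2 : |m| ≤ 2 := by exact_mod_cast hmb
  obtain ⟨hmL, hmR⟩ := abs_le.mp hm2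
  interval_cases m
  · have h4 : a^2 = 0 := by linarith
    exact ha (pow_eq_zero_iff (by norm_num) |>.mp h4)
  · exact hb1 (by linarith)
  · exact hb2 (by linarith)
  · exact hb3 (by linarith)
  · exact hsq ⟨0, by linarith⟩

lemma gform (a b : ℤ) (g : ℕ → ℤ) (d : ℕ)
    (hg : ∀ j, j ≤ d → g (j+2) = a * g (j+1) + b * g j) :
    ∀ m i, i + m ≤ d + 1 → g (i + m + 1) = pseq a b (m+1) * g (i+1) + b * pseq a b m * g i := by
  intro m
  induction m using Nat.strong_induction_on with
  | _ m ih =>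
    match m with
    | 0 => intro i hi; simp [pseq]
    | 1 =>
      intro i hi
      have := hg i (by omega)
      simp only [pseq]
      rw [show i + 1 + 1 = i + 2 from rfl, this]
      ring
    | (m+2) =>
      intro i hi
      have h2 := hg (i + m + 1) (by omega)
      have e1 := ih (m+1) (by omega) i (by omega)
      have e0 := ih m (by omega) i (by omega)
      have : i + (m+2) + 1 = (i + m + 1) + 2 := by omega
      rw [this, h2, show i + m + 1 + 1 = i + (m+1) + 1 from rfl, e1,
        show i + m + 1 = i + m + 1 from rfl, show (i+m+1 : ℕ) = i + m + 1 from rfl]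
      rw [show (i + m + 1 : ℕ) = i + m + 1 from rfl] at e0 ⊢
      rw [show i + m + 1 = i + m + 1 from rfl]
      rw [show g (i + m + 1) = pseq a b (m+1) * g (i+1) + b * pseq a b m * g i from e0]
      show _ = pseq a b (m+2+1) * g (i+1) + b * pseq a b (m+2) * g i
      rw [show pseq a b (m+2+1) = a * pseq a b (m+2) + b * pseq a b (m+1) from rfl,
        show pseq a b (m+2) = a * pseq a b (m+1) + b * pseq a b m from rfl]
      ring

theorem stmt12 (a b : ℤ) (u : ℕ → ℕ) (hu : ∀ n, u n = 0 ∨ u n = 1)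
    (f : ℕ → ℤ)
    (hf0 : f 0 = 1) (hf1 : f 1 = 1) (hf2 : f 2 = a + b)
    (hfrec : ∀ n, 3 ≤ n → f n = a * f (n - u n - 1) + b * f (n - u n - 2))
    (hblocks : ∀ d : ℕ, ∃ n : ℕ, 2 ≤ n ∧ (∀ j ≤ d, u (n + j) = 0) ∧
      f (n - 1) * f (n - 2) ≠ 0)
    (ha : a ≠ 0)
    (hb1 : b ≠ -a ^ 2) (hb2 : 2 * b ≠ -a ^ 2) (hb3 : 3 * b ≠ -a ^ 2)
    (hsq : ¬∃ k : ℤ, a ^ 2 + 4 * b = k ^ 2) :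
    {q : ℚ | ∃ n : ℕ, f n ≠ 0 ∧ q = (f (n + 1) : ℚ) / (f n : ℚ)}.Infinite := by
  classical
  have hb : b ≠ 0 := by rintro rfl; exact hsq ⟨a, by ring⟩
  have hp := pseq_ne_zero a b ha hb1 hb2 hb3 hsq
  by_contra hfin
  rw [Set.not_infinite] at hfin
  set N := hfin.toFinset.card with hN
  obtain ⟨n, hn2, hu0, hfn⟩ := hblocks N
  set g : ℕ → ℤ := fun j => f (n - 2 + j) with hgdef
  have hg0 : g 0 ≠ 0 := by
    show f (n - 2 + 0) ≠ 0
    rw [show n - 2 + 0 = n - 2 by omega]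
    exact right_ne_zero_of_mul hfn
  have hg1 : g 1 ≠ 0 := by
    show f (n - 2 + 1) ≠ 0
    rw [show n - 2 + 1 = n - 1 by omega]
    exact left_ne_zero_of_mul hfn
  have hgrec : ∀ j, j ≤ N → g (j+2) = a * g (j+1) + b * g j := by
    intro j hj
    show f (n - 2 + (j+2)) = a * f (n - 2 + (j+1)) + b * f (n - 2 + j)
    rw [show n - 2 + (j + 2) = n + j by omega]
    by_cases h3 : 3 ≤ n + j
    · have hr := hfrec (n+j) h3
      rw [hu0 j hj] at hr
      rw [hr, show n + j - 0 - 1 = n - 2 + (j+1) by omega,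
        show n + j - 0 - 2 = n - 2 + j by omega]
    · have hnn : n = 2 := by omega
      have hjj : j = 0 := by omega
      subst hnn; subst hjj
      simp [hf0, hf1, hf2]
  -- no two consecutive zeros
  have hQ : ∀ j, j ≤ N + 1 → ¬(g j = 0 ∧ g (j+1) = 0) := by
    intro j
    induction j with
    | zero => intro _ h; exact hg0 h.1
    | succ j ih =>
      intro hj h
      have hrec := hgrec j (by omega)
      apply ih (by omega)
      refine ⟨?_, h.1⟩
      have h2 : (0:ℤ) = b * g j := by
        rw [h.1, h.2] at hrec; simpa using hrec
      exact (mul_eq_zero.mp h2.symm).resolve_left hb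
  -- at most one zero in the window
  have key0 : ∀ i i', i < i' → i' ≤ N + 1 → g i = 0 → g i' = 0 → False := by
    intro i i' hii hle hgi hgi'
    have hgi1 : g (i+1) ≠ 0 := fun h => hQ i (by omega) ⟨hgi, h⟩
    set k := i' - i with hk
    have hk1 : 1 ≤ k := by omega
    have hform := gform a b g N hgrec (k-1) i (by omega)
    rw [show i + (k-1) + 1 = i' by omega, show (k-1)+1 = k by omega, hgi', hgi] at hform
    have h2 : pseq a b k * g (i+1) = 0 := by linarith
    exact hp k hk1 ((mul_eq_zero.mp h2).resolve_right hgi1)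
  have key1 : ∀ i i', i < i' → i' ≤ N + 1 → g i ≠ 0 → g i' ≠ 0 →
      (g (i+1) : ℚ)/(g i : ℚ) = (g (i'+1) : ℚ)/(g i' : ℚ) → False := by
    intro i i' hii hle hgi hgi' heq
    set k := i' - i with hk
    have hk1 : 1 ≤ k := by omega
    have hfa := gform a b g N hgrec (k-1) i (by omega)
    rw [show i + (k-1) + 1 = i' by omega, show (k-1)+1 = k by omega] at hfa
    have hfb := gform a b g N hgrec k i (by omega)
    rw [show i + k + 1 = i' + 1 by omega] at hfb
    have hcross : g (i+1) * g i' = g (i'+1) * g i := by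
      rw [div_eq_div_iff (Int.cast_ne_zero.mpr hgi) (Int.cast_ne_zero.mpr hgi')] at heq
      exact_mod_cast heq
    set x := g (i+1) with hx
    set y := g i with hy
    rw [hfa, hfb] at hcross
    have hrec : pseq a b (k+1) = a * pseq a b k + b * pseq a b (k-1) := by
      have e : k + 1 = (k-1) + 2 := by omega
      have e1 : (k-1) + 1 = k := by omega
      rw [e, show pseq a b (k-1+2) = a * pseq a b (k-1+1) + b * pseq a b (k-1) from rfl, e1]
    have hzero : pseq a b k * (x^2 - a*x*y - b*y^2) = 0 := by
      linear_combination hcross + x*y*hrec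
    have hqz : x^2 - a*x*y - b*y^2 = 0 :=
      (mul_eq_zero.mp hzero).resolve_left (hp k hk1)
    have hy2 : (2*x - a*y)^2 = y^2 * (a^2 + 4*b) := by linear_combination 4*hqz
    have hyd : y ∣ (2*x - a*y) :=
      (Int.pow_dvd_pow_iff (two_ne_zero)).mp ⟨a^2+4*b, hy2⟩
    obtain ⟨c, hc⟩ := hyd
    refine hsq ⟨c, ?_⟩
    have hy2' : y^2 * (a^2+4*b) = y^2 * c^2 := by rw [← hy2, hc]; ring
    exact (mul_left_cancel₀ (pow_ne_zero 2 hgi) hy2')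
  -- pigeonhole
  set J : Finset ℕ := (Finset.range (N+2)).filter (fun j => g j ≠ 0) with hJ
  have hJcard : N + 1 ≤ J.card := by
    have hz : ((Finset.range (N+2)).filter (fun j => ¬ g j ≠ 0)).card ≤ 1 := by
      apply Finset.card_le_one.mpr
      intro i hi i' hi'
      simp only [Finset.mem_filter, Finset.mem_range, not_not] at hi hi'
      by_contra hne
      rcases lt_or_gt_of_ne hne with h | h
      · exact key0 i i' h (by omega) hi.2 hi'.2
      · exact key0 i' i h (by omega) hi'.2 hi.2
    have htot := Finset.card_filter_add_card_filter_not
      (s := Finset.range (N+2)) (p := fun j => g j ≠ 0)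
    rw [Finset.card_range, ← hJ] at htot
    omega
  have hmaps : ∀ j ∈ J, ((g (j+1) : ℚ) / (g j : ℚ)) ∈ hfin.toFinset := by
    intro j hj
    rw [hJ, Finset.mem_filter] at hj
    rw [Set.Finite.mem_toFinset]
    exact ⟨n - 2 + j, hj.2, rfl⟩
  have hlt : hfin.toFinset.card < J.card := by omega
  obtain ⟨i, hiJ, i', hi'J, hne, heq⟩ :=
    Finset.exists_ne_map_eq_of_card_lt_of_maps_to hlt hmaps
  rw [hJ, Finset.mem_filter, Finset.mem_range] at hiJ hi'J
  rcases lt_or_gt_of_ne hne with h | h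
  · exact key1 i i' h (by omega) hiJ.2 hi'J.2 heq
  · exact key1 i' i h (by omega) hi'J.2 hiJ.2 heq.symm
end

section
/- There is no pair of integers (a, b) with a·b ≠ 0 satisfying a³ + a²b + 2ab + b² = 0. -/
theorem stmt17 (a b : ℤ) (hab : a * b ≠ 0) :
    a ^ 3 + a ^ 2 * b + 2 * a * b + b ^ 2 ≠ 0 := by
  intro h
  have ha : a ≠ 0 := fun h0 => hab (by simp [h0])
  have ht : (2 * b + a ^ 2 + 2 * a) ^ 2 = a ^ 2 * (a ^ 2 + 4) := by
    linear_combination 4 * h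
  have hdvd : a ∣ (2 * b + a ^ 2 + 2 * a) := by
    have h2 : a ^ 2 ∣ (2 * b + a ^ 2 + 2 * a) ^ 2 := ⟨a ^ 2 + 4, ht⟩
    exact (Int.pow_dvd_pow_iff two_ne_zero).mp h2
  obtain ⟨u, hu⟩ := hdvd
  have hu2 : u ^ 2 = a ^ 2 + 4 := by
    have h3 : a ^ 2 * u ^ 2 = a ^ 2 * (a ^ 2 + 4) := by rw [← ht, hu]; ring
    exact mul_left_cancel₀ (pow_ne_zero 2 ha) h3
  have hxy : (u - a) * (u + a) = 4 := by linear_combination hu2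
  have hx4 : (u - a) ∣ 4 := ⟨u + a, hxy.symm⟩
  have hb1 : u - a ≤ 4 := Int.le_of_dvd (by norm_num) hx4
  have hb2 : -(4:ℤ) ≤ u - a := by
    have := Int.le_of_dvd (show (0:ℤ) < 4 by norm_num) ((neg_dvd).mpr hx4)
    omega
  interval_cases h' : (u - a) <;> omega
end

section
/- The only pair of integers (a, b) with a·b ≠ 0 satisfying a⁴ + a³b + 3a²b + 2ab² + b² = 0 is (a, b) = (1, −1). -/
theorem stmt18 (a b : ℤ) (hab : a * b ≠ 0) :
    a ^ 4 + a ^ 3 * b + 3 * a ^ 2 * b + 2 * a * b ^ 2 + b ^ 2 = 0 ↔ a = 1 ∧ b = -1 := by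
  have ha : a ≠ 0 := fun h => hab (by rw [h]; ring)
  constructor
  · intro h
    set t : ℤ := 2 * (2 * a + 1) * b + a ^ 3 + 3 * a ^ 2 with ht_def
    have ht : t ^ 2 = a ^ 4 * ((a - 1) ^ 2 + 4) := by
      rw [ht_def]; linear_combination (4 * (2 * a + 1)) * h
    have hdvd : (a ^ 2) ^ 2 ∣ t ^ 2 := ⟨(a - 1) ^ 2 + 4, by linear_combination ht⟩
    have hdvd2 : a ^ 2 ∣ t := (Int.pow_dvd_pow_iff two_ne_zero).mp hdvd
    obtain ⟨s, hs⟩ := hdvd2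
    have key : s ^ 2 = (a - 1) ^ 2 + 4 := by
      have ha4 : (a : ℤ) ^ 4 ≠ 0 := pow_ne_zero 4 ha
      apply mul_left_cancel₀ ha4
      calc a ^ 4 * s ^ 2 = (a ^ 2 * s) ^ 2 := by ring
        _ = t ^ 2 := by rw [hs]
        _ = a ^ 4 * ((a - 1) ^ 2 + 4) := ht
    have h4 : (s - (a - 1)) * (s + (a - 1)) = 4 := by linear_combination key
    have hd : (s - (a - 1)) ∣ 4 := ⟨s + (a - 1), h4.symm⟩
    have hub : s - (a - 1) ≤ 4 := Int.le_of_dvd (by norm_num) hd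
    have hlb : -4 ≤ s - (a - 1) := by
      have := Int.le_of_dvd (show (0:ℤ) < 4 by norm_num) ((neg_dvd).mpr hd)
      linarith
    have ha1 : a = 1 := by
      set d : ℤ := s - (a - 1) with hd_def
      have h4' : d * (d + 2 * (a - 1)) = 4 := by rw [hd_def]; ring_nf; linarith [h4]
      interval_cases d <;> omega
    refine ⟨ha1, ?_⟩
    subst ha1
    have hfac : (3 * b + 1) * (b + 1) = 0 := by linear_combination h
    rcases mul_eq_zero.mp hfac with h1 | h1 <;> omega
  · rintro ⟨rfl, rfl⟩; norm_num
end

section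
/- The only pair of integers (a, b) with a·b ≠ 0 satisfying a⁵ + a⁴b + 4a³b + 3a²b² + 3ab² + b³ = 0 is (a, b) = (2, −2). -/
private lemma dvdbound (m x : ℤ) (h : m ∣ x) (h0 : 0 ≤ x) (h1 : x < m) : x = 0 := by
  rcases h0.lt_or_eq with hx | hx
  · exact absurd (Int.le_of_dvd hx h) (not_le.mpr h1)
  · exact hx.symm

theorem stmt19 (a b : ℤ) (hab : a * b ≠ 0) :
    a ^ 5 + a ^ 4 * b + 4 * a ^ 3 * b + 3 * a ^ 2 * b ^ 2 + 3 * a * b ^ 2 + b ^ 3 = 0 ↔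
      a = 2 ∧ b = -2 := by
  constructor
  · intro h
    obtain ⟨ha0, hb0⟩ := mul_ne_zero_iff.mp hab
    -- Step 1: a ∣ b
    have hadvd : ∃ c : ℤ, b = a * c ∧ c ≠ 0 := by
      have hgpos : 0 < Int.gcd a b := by
        rcases Nat.eq_zero_or_pos (Int.gcd a b) with hg | hg
        · exact absurd (Int.gcd_eq_zero_iff.mp hg).1 ha0
        · exact hg
      set g : ℤ := (Int.gcd a b : ℤ) with hgdef
      have hg0 : g ≠ 0 := by
        simp only [hgdef, ne_eq, Int.natCast_eq_zero]
        omega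
      obtain ⟨a₁, ha₁⟩ : g ∣ a := Int.gcd_dvd_left a b
      obtain ⟨b₁, hb₁⟩ : g ∣ b := Int.gcd_dvd_right a b
      have hco : Int.gcd a₁ b₁ = 1 := by
        have h1 : a / g = a₁ := by rw [ha₁]; exact Int.mul_ediv_cancel_left _ hg0
        have h2 : b / g = b₁ := by rw [hb₁]; exact Int.mul_ediv_cancel_left _ hg0
        rw [← h1, ← h2]
        exact Int.gcd_div_gcd_div_gcd hgpos
      have hE1 : g^2*a₁^5 + g^2*a₁^4*b₁ + 4*g*a₁^3*b₁ + 3*g*a₁^2*b₁^2 + 3*a₁*b₁^2 + b₁^3 = 0 := by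
        apply mul_left_cancel₀ (pow_ne_zero 3 hg0)
        rw [mul_zero]
        rw [ha₁, hb₁] at h
        linear_combination h
      have hdvd3 : a₁ ∣ b₁^3 :=
        ⟨-(g^2*a₁^4 + g^2*a₁^3*b₁ + 4*g*a₁^2*b₁ + 3*g*a₁*b₁^2 + 3*b₁^2), by linear_combination hE1⟩
      have hcop : IsCoprime a₁ b₁ := Int.isCoprime_iff_gcd_eq_one.mpr hco
      have hunit : IsUnit a₁ := (hcop.pow_right (n := 3)).isUnit_of_dvd' dvd_rfl hdvd3
      have ha₁sq : a₁ ^ 2 = 1 := by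
        rcases Int.isUnit_iff.mp hunit with h' | h' <;> rw [h'] <;> norm_num
      refine ⟨a₁ * b₁, ?_, ?_⟩
      · rw [ha₁, hb₁]; linear_combination (-(g*b₁)) * ha₁sq
      · intro hz
        rcases mul_eq_zero.mp hz with hz | hz
        · rw [hz] at ha₁sq; norm_num at ha₁sq
        · rw [hz, mul_zero] at hb₁; exact hb0 hb₁
    obtain ⟨c, hbc, hc0⟩ := hadvd
    -- Step 2: reduced quadratic in a
    have hE : (1+c)*a^2 + c*(3*c+4)*a + c^2*(c+3) = 0 := by
      apply mul_left_cancel₀ (pow_ne_zero 3 ha0)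
      rw [mul_zero]
      rw [hbc] at h
      linear_combination h
    by_cases hc1 : c = -1
    · rw [hc1] at hE
      have ha2 : a = 2 := by linear_combination -hE
      exact ⟨ha2, by rw [hbc, ha2, hc1]; norm_num⟩
    · exfalso
      -- complete the square
      have hs : (2*(1+c)*a + c*(3*c+4))^2 = c^2*(5*c^2+8*c+4) := by
        linear_combination (4*(1+c)) * hE
      have hcd : c ∣ (2*(1+c)*a + c*(3*c+4)) :=
        (Int.pow_dvd_pow_iff two_ne_zero).mp ⟨5*c^2+8*c+4, hs⟩
      obtain ⟨t, hst⟩ := hcd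
      have ht2 : t^2 = 5*c^2+8*c+4 := by
        have h4 : c^2 * t^2 = c^2 * (5*c^2+8*c+4) := by rw [← hs, hst]; ring
        exact mul_left_cancel₀ (pow_ne_zero 2 hc0) h4
      have hdvd : (c+1) ∣ (t - 1) := by
        have h5 : (c+1) ∣ c*(t - 3*c - 4) := ⟨2*a, by linear_combination -hst⟩
        have hcop : IsCoprime (c+1) c := ⟨1, -1, by ring⟩
        have h6 : (c+1) ∣ (t - 3*c - 4) := hcop.dvd_of_dvd_mul_left h5
        have h7 : t - 1 = (t - 3*c - 4) + 3*(c+1) := by ring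
        rw [h7]
        exact dvd_add h6 (dvd_mul_left _ _)
      have hcs : 1 ≤ c ∨ c ≤ -2 := by omega
      rcases hcs with hc | hc
      · -- c ≥ 1
        rcases le_or_gt 0 t with htpos | htneg
        · -- Branch A: c ≥ 1, t ≥ 0
          have hub : t ≤ 3*c+1 := by
            by_contra hcon
            have h' : 3*c+2 ≤ t := by omega
            have hfac : (t - (3*c+2)) * (t + (3*c+2)) = -(4*c^2+4*c) := by linear_combination ht2
            nlinarith [mul_nonneg (by linarith : (0:ℤ) ≤ t - (3*c+2)) (by linarith : (0:ℤ) ≤ t + (3*c+2))]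
          have hlb : 2*c+3 ≤ t := by
            by_contra hcon
            have h' : t ≤ 2*c+2 := by omega
            have hfac : (t - (2*c+2)) * (t + (2*c+2)) = c^2 := by linear_combination ht2
            nlinarith [mul_nonpos_of_nonpos_of_nonneg (by linarith : t - (2*c+2) ≤ 0) (by linarith : (0:ℤ) ≤ t + (2*c+2)), sq_nonneg c]
          have hx : (c+1) ∣ (t - (2*c+3)) := by
            have h7 : t - (2*c+3) = (t - 1) - 2*(c+1) := by ring
            rw [h7]; exact dvd_sub hdvd (dvd_mul_left _ _)
          have hx0 : t - (2*c+3) = 0 := dvdbound _ _ hx (by linarith) (by linarith)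
          have hteq : t = 2*c+3 := by linarith
          have h8 : (c-5)*(c+1) = 0 := by linear_combination (t + 2*c + 3) * hteq - ht2
          rcases mul_eq_zero.mp h8 with h9 | h9
          · have hc5 : c = 5 := by linarith
            have ht13 : t = 13 := by omega
            rw [hc5, ht13] at hst
            norm_num at hst
            omega
          · omega
        · -- Branch B: c ≥ 1, t < 0
          have hub : -t ≤ 3*c+1 := by
            by_contra hcon
            have h' : 3*c+2 ≤ -t := by omega
            have hfac : (-t - (3*c+2)) * (-t + (3*c+2)) = -(4*c^2+4*c) := by linear_combination ht2
            nlinarith [mul_nonneg (by linarith : (0:ℤ) ≤ -t - (3*c+2)) (by linarith : (0:ℤ) ≤ -t + (3*c+2))]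
          have hlb : 2*c+3 ≤ -t := by
            by_contra hcon
            have h' : -t ≤ 2*c+2 := by omega
            have hfac : (-t - (2*c+2)) * (-t + (2*c+2)) = c^2 := by linear_combination ht2
            nlinarith [mul_nonpos_of_nonpos_of_nonneg (by linarith : -t - (2*c+2) ≤ 0) (by linarith : (0:ℤ) ≤ -t + (2*c+2)), sq_nonneg c]
          have hx : (c+1) ∣ (t + 3*c + 2) := by
            have h7 : t + 3*c + 2 = (t - 1) + 3*(c+1) := by ring
            rw [h7]; exact dvd_add hdvd (dvd_mul_left _ _)
          have hx0 : t + 3*c + 2 = 0 := dvdbound _ _ hx (by linarith) (by linarith)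
          linarith
      · -- c ≤ -2
        rcases le_or_gt 0 t with htpos | htneg
        · -- Branch C: c ≤ -2, t ≥ 0
          have hlb : -2*c-1 ≤ t := by
            by_contra hcon
            have h' : t ≤ -2*c-2 := by omega
            have hfac : (t - (-2*c-2)) * (t + (-2*c-2)) = c^2 := by linear_combination ht2
            nlinarith [mul_nonpos_of_nonpos_of_nonneg (by linarith : t - (-2*c-2) ≤ 0) (by linarith : (0:ℤ) ≤ t + (-2*c-2)), sq_nonneg c]
          have hub : t ≤ -3*c-4 := by
            by_contra hcon
            have h' : -3*c-3 ≤ t := by omega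
            have hfac : (t - (-3*c-3)) * (t + (-3*c-3)) = -(4*c^2+10*c+5) := by linear_combination ht2
            nlinarith [mul_nonneg (by linarith : (0:ℤ) ≤ t - (-3*c-3)) (by linarith : (0:ℤ) ≤ t + (-3*c-3)), sq_nonneg (c+2)]
          have hx : (c+1) ∣ (t + 2*c + 1) := by
            have h7 : t + 2*c + 1 = (t - 1) + 2*(c+1) := by ring
            rw [h7]; exact dvd_add hdvd (dvd_mul_left _ _)
          have hx' : (-(c+1)) ∣ (t + 2*c + 1) := (neg_dvd).mpr hx
          have hx0 : t + 2*c + 1 = 0 := dvdbound _ _ hx' (by linarith) (by linarith)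
          have hteq : t = -2*c-1 := by linarith
          have h8 : (c+1)*(c+3) = 0 := by linear_combination (t - 2*c - 1) * hteq - ht2
          rcases mul_eq_zero.mp h8 with h9 | h9
          · omega
          · have hc3 : c = -3 := by linarith
            have ht5 : t = 5 := by omega
            rw [hc3, ht5] at hst
            norm_num at hst
            omega
        · -- Branch D: c ≤ -2, t < 0
          have hlb : 3*c+4 ≤ t := by
            by_contra hcon
            have h' : -3*c-3 ≤ -t := by omega
            have hfac : (-t - (-3*c-3)) * (-t + (-3*c-3)) = -(4*c^2+10*c+5) := by linear_combination ht2
            nlinarith [mul_nonneg (by linarith : (0:ℤ) ≤ -t - (-3*c-3)) (by linarith : (0:ℤ) ≤ -t + (-3*c-3)), sq_nonneg (c+2)]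
          have hub : t ≤ 2*c+1 := by
            by_contra hcon
            have h' : -t ≤ -2*c-2 := by omega
            have hfac : (-t - (-2*c-2)) * (-t + (-2*c-2)) = c^2 := by linear_combination ht2
            nlinarith [mul_nonpos_of_nonpos_of_nonneg (by linarith : -t - (-2*c-2) ≤ 0) (by linarith : (0:ℤ) ≤ -t + (-2*c-2)), sq_nonneg c]
          have hx : (c+1) ∣ (t - (3*c+4)) := by
            have h7 : t - (3*c+4) = (t - 1) - 3*(c+1) := by ring
            rw [h7]; exact dvd_sub hdvd (dvd_mul_left _ _)
          have hx' : (-(c+1)) ∣ (t - (3*c+4)) := (neg_dvd).mpr hx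
          have hx0 : t - (3*c+4) = 0 := dvdbound _ _ hx' (by linarith) (by linarith)
          have hteq : t = 3*c+4 := by linarith
          have h8 : (2*c+2)*(2*c+6) = 0 := by linear_combination ht2 - (t + 3*c + 4) * hteq
          rcases mul_eq_zero.mp h8 with h9 | h9
          · omega
          · have hc3 : c = -3 := by linarith
            have ht5 : t = -5 := by omega
            rw [hc3, ht5] at hst
            norm_num at hst
            omega
  · rintro ⟨rfl, rfl⟩
    norm_num
end
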